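/- arXiv:2312.01076 — 8 statements merged into one kernel-verified Lean document; each statement's English description precedes it below -/
import Mathlib

section
/- For every real number x, |cos(πx)| ≤ 1 − π·‖x‖², where ‖x‖ denotes the distance from x to the nearest integer. -/
/-!
Write `x = n + t` with `n` the nearest integer, so `|t| ≤ 1/2` and `|cos (π x)| = cos (π |t|)`.
With `u = π |t| / 2 ≤ 1` we have `cos (π t) = 1 - 2 sin² u`, and the Taylor bound
`sin u ≥ u (1 - u²/6) ≥ 5u/6` gives `sin² u ≥ (25/36) u² ≥ (2/π) u² = π t² / 2`, since `π > 72/25`.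
-/

/-- Distance from a real number to the nearest integer. -/
noncomputable def nearestIntDist (y : ℝ) : ℝ := |y - round y|

open Real

lemma two_div_pi_mul_sq_le_sin_sq {u : ℝ} (h0 : 0 ≤ u) (h1 : u ≤ 1) :
    2 / π * u ^ 2 ≤ sin u ^ 2 := by
  have hfactor : 5 / 6 ≤ 1 - u ^ 2 / 6 := by nlinarith
  have htaylor : u * (1 - u ^ 2 / 6) ≤ sin u := by
    linarith [sin_ge_sub_cube h0]
  have hpi : 2 / π ≤ (1 - u ^ 2 / 6) ^ 2 := by
    rw [div_le_iff₀ pi_pos]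
    nlinarith [pi_gt_three]
  calc 2 / π * u ^ 2 ≤ (u * (1 - u ^ 2 / 6)) ^ 2 := by
        rw [mul_pow, mul_comm]; gcongr
    _ ≤ sin u ^ 2 := by gcongr

lemma cos_pi_mul_le_one_sub_pi_mul_sq {a : ℝ} (ha : |a| ≤ 1 / 2) :
    cos (π * a) ≤ 1 - π * a ^ 2 := by
  set u := π * |a| / 2 with hu
  have hcos : cos (π * a) = 1 - 2 * sin u ^ 2 := by
    rw [← cos_abs, abs_mul, abs_of_pos pi_pos, ← cos_two_mul_eq_one_sub, hu]
    ring_nf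
  have hu1 : u ≤ 1 := by rw [hu]; nlinarith [pi_le_four, abs_nonneg a]
  have hsin := two_div_pi_mul_sq_le_sin_sq (by positivity) hu1
  have hsq : 2 / π * u ^ 2 = π * a ^ 2 / 2 := by
    rw [hu, ← sq_abs a]
    field_simp
  rw [hcos]
  linarith

lemma abs_cos_pi_mul_eq_cos_pi_mul_nearestIntDist (x : ℝ) :
    |cos (π * x)| = cos (π * nearestIntDist x) := by
  have hshift : π * x = π * (x - round x) + (round x : ℤ) * π := by ring
  rw [hshift, cos_add_int_mul_pi, abs_mul, abs_neg_one_zpow, one_mul, ← cos_abs,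
    abs_mul, abs_of_pos pi_pos, abs_of_nonneg]
  · rfl
  · apply cos_nonneg_of_mem_Icc
    constructor <;> nlinarith [pi_pos, abs_nonneg (x - round x), abs_sub_round x]

theorem cos_abs_le_one_sub_pi_nearestIntDist_sq (x : ℝ) :
    |Real.cos (Real.pi * x)| ≤ 1 - Real.pi * (nearestIntDist x) ^ 2 := by
  rw [abs_cos_pi_mul_eq_cos_pi_mul_nearestIntDist]
  apply cos_pi_mul_le_one_sub_pi_mul_sq
  rw [nearestIntDist, abs_abs]
  exact abs_sub_round x
end

section
/- Let k be a positive integer and let u_0, …, u_{k−1} be nonnegative integers with u_0 + ⋯ + u_{k−1} > 0. Then there exist integers v_0, …, v_{k−1} with each v_j ∈ {0, …, b−1}, such that ∑_{j=0}^{k−1} u_j b^j ≡ ∑_{j=0}^{k−1} v_j b^j (mod b^k − 1) and 0 < ∑_{j=0}^{k−1} v_j ≤ ∑_{j=0}^{k−1} u_j. -/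
/-!
Cyclic carrying: while some `u i ≥ b`, trade `b` units at position `i` for one unit at position
`(i + 1) % k`. As `b * b ^ i = b ^ (i + 1) ≡ b ^ ((i + 1) % k) [MOD b ^ k - 1]`, the weighted sum is
unchanged modulo `b ^ k - 1`, while the digit sum drops by `b - 1 ≥ 1` and stays positive.
-/

open Finset

theorem Nat.pow_modEq_pow_mod {b : ℕ} (hb : 0 < b) (k n : ℕ) :
    b ^ n ≡ b ^ (n % k) [MOD b ^ k - 1] := by
  have hbk : b ^ k ≡ 1 [MOD b ^ k - 1] := Nat.modEq_sub (Nat.one_le_pow _ _ hb)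
  calc b ^ n = (b ^ k) ^ (n / k) * b ^ (n % k) := by rw [← pow_mul, ← pow_add, Nat.div_add_mod]
    _ ≡ 1 ^ (n / k) * b ^ (n % k) [MOD b ^ k - 1] := (hbk.pow _).mul_right _
    _ = b ^ (n % k) := by rw [one_pow, one_mul]

section AddIndicator

variable {k i : ℕ} (w : ℕ → ℕ)

theorem sum_range_add_ite (hi : i < k) (a : ℕ) :
    ∑ j ∈ range k, (w j + if j = i then a else 0) = ∑ j ∈ range k, w j + a := by
  simp [sum_add_distrib, hi]

theorem sum_range_add_ite_mul_pow (hi : i < k) (a b : ℕ) :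
    ∑ j ∈ range k, (w j + if j = i then a else 0) * b ^ j =
      ∑ j ∈ range k, w j * b ^ j + a * b ^ i := by
  simp [add_mul, sum_add_distrib, ite_mul, hi]

end AddIndicator

theorem exists_cyclic_carry {b k i : ℕ} (hb : 0 < b) (hk : 0 < k) (u : ℕ → ℕ) (hi : i < k)
    (hbi : b ≤ u i) :
    ∃ u' : ℕ → ℕ, ∑ j ∈ range k, u' j + b = ∑ j ∈ range k, u j + 1 ∧
      ∑ j ∈ range k, u j * b ^ j ≡ ∑ j ∈ range k, u' j * b ^ j [MOD b ^ k - 1] := by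
  obtain ⟨w, rfl⟩ : ∃ w : ℕ → ℕ, u = fun j ↦ w j + if j = i then b else 0 :=
    ⟨Function.update u i (u i - b), by funext j; by_cases h : j = i <;> simp [h]; omega⟩
  have hi' : (i + 1) % k < k := Nat.mod_lt _ hk
  refine ⟨fun j ↦ w j + if j = (i + 1) % k then 1 else 0, ?_, ?_⟩
  · rw [sum_range_add_ite _ hi, sum_range_add_ite _ hi']
    ring
  · rw [sum_range_add_ite_mul_pow _ hi, sum_range_add_ite_mul_pow _ hi', ← pow_succ', one_mul]
    exact (Nat.pow_modEq_pow_mod hb k _).add_left _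

theorem digit_reduction_mod (b k : ℕ) (hb : 2 ≤ b) (hk : 0 < k) (u : ℕ → ℕ)
    (hu : 0 < ∑ j ∈ Finset.range k, u j) :
    ∃ v : ℕ → ℕ, (∀ j < k, v j ≤ b - 1) ∧
      (∑ j ∈ Finset.range k, u j * b ^ j) ≡ (∑ j ∈ Finset.range k, v j * b ^ j)
        [MOD b ^ k - 1] ∧
      0 < ∑ j ∈ Finset.range k, v j ∧
      (∑ j ∈ Finset.range k, v j) ≤ ∑ j ∈ Finset.range k, u j := by
  obtain ⟨n, h⟩ : ∃ n, ∑ j ∈ range k, u j = n := ⟨_, rfl⟩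
  induction n using Nat.strong_induction_on generalizing u with
  | _ n ih =>
  by_cases hdigits : ∀ j < k, u j ≤ b - 1
  · exact ⟨u, hdigits, .refl _, hu, le_rfl⟩
  push Not at hdigits
  obtain ⟨i, hi, hbi⟩ := hdigits
  have hui : u i ≤ ∑ j ∈ range k, u j := single_le_sum (fun _ _ ↦ Nat.zero_le _) (mem_range.2 hi)
  obtain ⟨u', hsum, hval⟩ := exists_cyclic_carry (show 0 < b by omega) hk u hi (by omega)
  obtain ⟨v, hv, hvval, hvpos, hvsum⟩ := ih _ (by omega) u' (by omega) rfl
  exact ⟨v, hv, hval.trans hvval, hvpos, by omega⟩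
end

section
/- Let k and t be positive integers with k > t/(b−1). Then no sum of t (not necessarily distinct) nonnegative integer powers of b is divisible by b^k − 1. -/
/-!
Reduce every exponent modulo `k` (this does not change the residue modulo `b ^ k - 1`) and count
how many of the `t` powers fall on each of the `k` digit positions. Whenever a position carries
`b` or more powers, trade `b` of them for one power at the next position (cyclically, since
`b ^ k ≡ 1`): this keeps the residue and positivity and lowers the number of powers by `b - 1`.
Once every position carries at most `b - 1` powers, the sum is a positive multiple of
`b ^ k - 1` that is at most `∑ (b - 1) b ^ i = b ^ k - 1`, so every position carries exactly
`b - 1`. Hence a positive multiple of `b ^ k - 1` needs at least `k (b - 1)` powers of `b`.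
-/

open Finset Fin.NatCast

namespace Nat

theorem pow_modEq_pow_mod_s7 {b : ℕ} (hb : 0 < b) (k m : ℕ) : b ^ m ≡ b ^ (m % k) [MOD b ^ k - 1] := by
  have hbk : b ^ k ≡ 1 [MOD b ^ k - 1] := Nat.modEq_sub (Nat.one_le_pow _ _ hb)
  calc b ^ m = (b ^ k) ^ (m / k) * b ^ (m % k) := by rw [← pow_mul, ← pow_add, Nat.div_add_mod]
    _ ≡ 1 ^ (m / k) * b ^ (m % k) [MOD b ^ k - 1] := (hbk.pow _).mul_right _
    _ = b ^ (m % k) := by rw [one_pow, one_mul]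

end Nat

section Digits

variable {b k : ℕ}

theorem sum_le_sum_mul_pow (hb : 0 < b) (c : Fin k → ℕ) : ∑ i, c i ≤ ∑ i, c i * b ^ (i : ℕ) :=
  sum_le_sum fun _ _ => Nat.le_mul_of_pos_right _ (Nat.pow_pos hb)

theorem sum_sub_one_mul_pow (hb : 0 < b) : ∑ i : Fin k, (b - 1) * b ^ (i : ℕ) = b ^ k - 1 := by
  have h := geom_sum_mul_add (b - 1) k
  rw [Nat.sub_add_cancel (by omega : 1 ≤ b)] at h
  rw [← mul_sum, Fin.sum_univ_eq_sum_range (b ^ ·), mul_comm]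
  omega

theorem eq_sub_one_of_dvd_sum_mul_pow (hb : 0 < b) (c : Fin k → ℕ) (hc : ∀ i, c i ≤ b - 1)
    (hpos : 0 < ∑ i, c i * b ^ (i : ℕ)) (hdvd : b ^ k - 1 ∣ ∑ i, c i * b ^ (i : ℕ)) :
    ∀ i, c i = b - 1 := by
  have hle : ∀ i ∈ univ, c i * b ^ (i : ℕ) ≤ (b - 1) * b ^ (i : ℕ) :=
    fun i _ => Nat.mul_le_mul_right _ (hc i)
  have heq : ∑ i, c i * b ^ (i : ℕ) = ∑ i : Fin k, (b - 1) * b ^ (i : ℕ) :=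
    le_antisymm (sum_le_sum hle) (sum_sub_one_mul_pow hb ▸ Nat.le_of_dvd hpos hdvd)
  intro i
  exact Nat.eq_of_mul_eq_mul_right (Nat.pow_pos hb)
    ((sum_eq_sum_iff_of_le hle).mp heq i (mem_univ i))

variable [NeZero k]

theorem sum_add_single_mul_pow_modEq (hb : 0 < b) (c : Fin k → ℕ) (j : Fin k) :
    ∑ i, (c + Pi.single j b : Fin k → ℕ) i * b ^ (i : ℕ) ≡
      ∑ i, (c + Pi.single (j + 1) 1 : Fin k → ℕ) i * b ^ (i : ℕ) [MOD b ^ k - 1] := by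
  simp only [Pi.add_apply, add_mul, sum_add_distrib, Pi.single_apply, ite_mul, zero_mul,
    sum_ite_eq', mem_univ, if_true, one_mul]
  refine Nat.ModEq.add_left _ ?_
  rw [← pow_succ', Fin.val_add, Fin.val_one', Nat.add_mod_mod]
  exact Nat.pow_modEq_pow_mod_s7 hb k _

theorem mul_sub_one_le_sum_of_dvd (hb : 2 ≤ b) (c : Fin k → ℕ) (hc : 0 < ∑ i, c i)
    (hdvd : b ^ k - 1 ∣ ∑ i, c i * b ^ (i : ℕ)) : k * (b - 1) ≤ ∑ i, c i := by
  obtain ⟨w, hw⟩ : ∃ w, ∑ i, c i = w := ⟨_, rfl⟩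
  induction w using Nat.strong_induction_on generalizing c with
  | _ w ih =>
  subst hw
  by_cases hsmall : ∀ i, c i ≤ b - 1
  · have hpos := hc.trans_le (sum_le_sum_mul_pow (b := b) (by omega) c)
    rw [sum_congr rfl fun i _ => eq_sub_one_of_dvd_sum_mul_pow (by omega) c hsmall hpos hdvd i]
    simp
  · push Not at hsmall
    obtain ⟨j, hj⟩ := hsmall
    obtain ⟨c₀, rfl⟩ : ∃ c₀, c = c₀ + Pi.single j b :=
      ⟨c - Pi.single j b, by ext i; by_cases h : i = j <;> simp [h]; omega⟩
    set c' := c₀ + Pi.single (j + 1) 1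
    have hsum : ∑ i, (c₀ + Pi.single j b : Fin k → ℕ) i = ∑ i, c₀ i + b := by
      simp [sum_add_distrib]
    have hsum' : ∑ i, c' i = ∑ i, c₀ i + 1 := by simp [c', sum_add_distrib]
    have hdvd' : b ^ k - 1 ∣ ∑ i, c' i * b ^ (i : ℕ) :=
      (Nat.ModEq.dvd_iff (sum_add_single_mul_pow_modEq (by omega) c₀ j) dvd_rfl).mp hdvd
    have := ih _ (by omega) c' (by omega) hdvd' rfl
    omega

theorem sum_pow_modEq_sum_card_mul_pow {ι : Type*} (hb : 0 < b) (s : Finset ι) (u : ι → ℕ) :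
    ∑ d ∈ s, b ^ u d ≡ ∑ i : Fin k, #{d ∈ s | (u d : Fin k) = i} * b ^ (i : ℕ) [MOD b ^ k - 1] := by
  rw [← sum_fiberwise s (fun d => (u d : Fin k)) (b ^ u ·)]
  refine Nat.ModEq.sum fun i _ => ?_
  rw [← smul_eq_mul, ← sum_const]
  refine Nat.ModEq.sum fun d hd => ?_
  rw [← (mem_filter.mp hd).2, Fin.val_natCast]
  exact Nat.pow_modEq_pow_mod_s7 hb k _

end Digits

theorem power_sum_not_dvd_general (b k t : ℕ) (hb : 2 ≤ b) (ht : 0 < t)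
    (hkt : (t : ℝ) / ((b : ℝ) - 1) < (k : ℝ)) (u : ℕ → ℕ) :
    ¬ (b ^ k - 1) ∣ (∑ d ∈ Finset.range t, b ^ u d) := by
  intro hdvd
  have htk : t < k * (b - 1) := by
    have hb1 : (1 : ℝ) < b := by exact_mod_cast hb
    rw [div_lt_iff₀ (by linarith), ← Nat.cast_pred (by omega)] at hkt
    exact_mod_cast hkt
  have : NeZero k := ⟨by rintro rfl; simp at htk⟩
  have hcount : ∑ i : Fin k, #{d ∈ range t | (u d : Fin k) = i} = t := by
    simp [sum_card_fiberwise_eq_card_filter]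
  have hdvd' := ((sum_pow_modEq_sum_card_mul_pow (by omega) (range t) u).dvd_iff dvd_rfl).mp hdvd
  have := mul_sub_one_le_sum_of_dvd hb _ (by omega) hdvd'
  omega

/-- If `k > t/(b-1)` then no sum of `t` nonnegative-integer powers of `b`
is divisible by `b^k - 1`. -/
theorem power_sum_not_dvd (b k t : ℕ) (hb : 2 ≤ b) (hk : 0 < k) (ht : 0 < t)
    (hkt : (t : ℝ) / ((b : ℝ) - 1) < (k : ℝ)) (u : ℕ → ℕ) :
    ¬ (b ^ k - 1) ∣ (∑ d ∈ Finset.range t, b ^ u d) :=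
  power_sum_not_dvd_general b k t hb ht hkt u
end

section
/- For every positive integer N there exists a real number γ_N such that for all n with 1 ≤ n ≤ N, ‖γ_N · b_n‖ ≥ (1/b⁴) · N^{−(log₂ b)/(b−1)}. -/
/-- `n` is a positive integer all of whose base-`b` digits lie in `{0,1}`. -/
def InDb (b n : ℕ) : Prop := n ≠ 0 ∧ ∀ d ∈ Nat.digits b n, d ≤ 1

/-!
Reading the binary expansion of `n` in base `b` enumerates `D_b` increasingly, so for `n ≤ N` the
number `b_n` has at most `k = ⌊log₂ N⌋ + 1` digits, all `0` or `1`. Take `γ = 1 / (b^T - 1)` with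
`T` least such that `k < (b - 1) T`. Modulo `b^T - 1` exponents may be reduced mod `T`; each residue class
then receives at most `b - 1` of the fewer than `(b - 1) T` digits, and some class fewer, so `b_n`
reduces to a number strictly between `0` and `b^T - 1`. Hence `‖γ b_n‖ ≥ 1 / (b^T - 1)`, while
`b^T ≤ b² N^{log₂ b / (b - 1)}`.
-/

open Finset

namespace Nat

theorem sum_range_mul_mod {M : Type*} [AddCommMonoid M] (f : ℕ → M) (c T : ℕ) :
    ∑ i ∈ range (c * T), f (i % T) = c • ∑ r ∈ range T, f r := by
  induction c with
  | zero => simp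
  | succ c ih =>
    rw [add_one_mul, sum_range_add, ih, add_smul, one_smul]
    congr 1
    refine sum_congr rfl fun i hi => ?_
    rw [add_comm, add_mul_mod_self_right, mod_eq_of_lt (mem_range.mp hi)]

theorem sum_range_pow_mod_lt {b T K : ℕ} (hK : K < (b - 1) * T) :
    ∑ i ∈ range K, b ^ (i % T) < b ^ T - 1 := by
  obtain ⟨c, rfl⟩ : ∃ c, b = c + 1 := ⟨b - 1, by grind⟩
  have hfull : ∑ i ∈ range (c * T), (c + 1) ^ (i % T) = (c + 1) ^ T - 1 := by
    rw [sum_range_mul_mod, smul_eq_mul, mul_comm, ← geom_sum_mul_add c T, Nat.add_sub_cancel]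
  rw [Nat.add_sub_cancel] at hK
  rw [← hfull]
  exact sum_lt_sum_of_subset (range_subset_range.mpr hK.le) (mem_range.mpr hK)
    (by simp) (by positivity) fun _ _ _ => Nat.zero_le _

theorem sum_pow_modEq_sum_pow_mod {b : ℕ} (hb : b ≠ 0) (T : ℕ) (s : Finset ℕ) :
    ∑ i ∈ s, b ^ i ≡ ∑ i ∈ s, b ^ (i % T) [MOD b ^ T - 1] := by
  have hT : b ^ T ≡ 1 [MOD b ^ T - 1] := modEq_sub (one_le_pow _ _ (pos_of_ne_zero hb))
  refine ModEq.sum fun i _ => ?_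
  calc b ^ i = (b ^ T) ^ (i / T) * b ^ (i % T) := by rw [← pow_mul, ← pow_add, div_add_mod]
    _ ≡ 1 ^ (i / T) * b ^ (i % T) [MOD b ^ T - 1] := (hT.pow _).mul_right _
    _ = b ^ (i % T) := by rw [one_pow, one_mul]

theorem pow_sub_one_not_dvd_sum_pow {b T K : ℕ} {s : Finset ℕ} (hs : s.Nonempty)
    (hsK : s ⊆ range K) (hK : K < (b - 1) * T) : ¬ b ^ T - 1 ∣ ∑ i ∈ s, b ^ i := by
  have hb : b ≠ 0 := by rintro rfl; simp at hK
  rw [(sum_pow_modEq_sum_pow_mod hb T s).dvd_iff dvd_rfl]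
  refine not_dvd_of_pos_of_lt (sum_pos (fun i _ => by positivity) hs) ?_
  exact (sum_le_sum_of_subset hsK).trans_lt (sum_range_pow_mod_lt hK)

theorem exists_ofDigits_eq_sum_pow (b : ℕ) {L : List ℕ} (hL : ∀ l ∈ L, l ≤ 1) :
    ∃ s ⊆ range L.length, ofDigits b L = ∑ i ∈ s, b ^ i := by
  induction L with
  | nil => exact ⟨∅, by simp⟩
  | cons a L ih =>
    obtain ⟨s, hsL, hs⟩ := ih fun l hl => hL l (List.mem_cons_of_mem a hl)
    set s' := s.map ⟨(· + 1), add_left_injective 1⟩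
    have hs' : s' ⊆ range (L.length + 1) := by
      rw [range_add_one']; exact (map_subset_map.mpr hsL).trans (subset_insert _ _)
    have hsum : ∑ i ∈ s', b ^ i = b * ∑ i ∈ s, b ^ i := by
      simp [s', sum_map, mul_sum, pow_succ, mul_comm]
    rcases (show a = 0 ∨ a = 1 by have := hL a List.mem_cons_self; omega) with rfl | rfl
    · exact ⟨s', hs', by rw [ofDigits_cons, hs, hsum, zero_add]⟩
    · refine ⟨insert 0 s', insert_subset (by simp) hs', ?_⟩
      rw [sum_insert (by simp [s']), ofDigits_cons, hs, hsum, pow_zero]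

end Nat

def binaryToBase (b n : ℕ) : ℕ := Nat.ofDigits b (Nat.digits 2 n)

theorem binaryToBase_eq (b n : ℕ) : binaryToBase b n = n % 2 + b * binaryToBase b (n / 2) := by
  rcases n.eq_zero_or_pos with rfl | hn
  · simp [binaryToBase]
  · rw [binaryToBase, Nat.digits_def' one_lt_two hn, Nat.ofDigits_cons, binaryToBase]

section binaryToBase

variable {b : ℕ}

theorem strictMono_binaryToBase (hb : 2 ≤ b) : StrictMono (binaryToBase b) := by
  intro m n hmn
  induction n using Nat.strong_induction_on generalizing m with
  | _ n ih =>
    rw [binaryToBase_eq b m, binaryToBase_eq b n]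
    rcases (Nat.div_le_div_right (c := 2) hmn.le).lt_or_eq with hlt | heq
    · have hstep : b * (binaryToBase b (m / 2) + 1) ≤ b * binaryToBase b (n / 2) :=
        Nat.mul_le_mul_left b (ih (n / 2) (by omega) hlt)
      rw [mul_add_one] at hstep
      have := Nat.mod_lt m two_pos
      omega
    · rw [heq]; omega

theorem binaryToBase_pos (hb : 2 ≤ b) {n : ℕ} (hn : n ≠ 0) : 0 < binaryToBase b n := by
  simpa [binaryToBase] using strictMono_binaryToBase hb (Nat.pos_of_ne_zero hn)

theorem digits_binaryToBase (hb : 2 ≤ b) (n : ℕ) :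
    Nat.digits b (binaryToBase b n) = Nat.digits 2 n :=
  Nat.digits_ofDigits b hb _ (fun _ hl => (Nat.digits_lt_base one_lt_two hl).trans_le hb)
    fun h => Nat.getLast_digit_ne_zero 2 fun hn => h (by simp [hn])

theorem range_binaryToBase_succ (hb : 2 ≤ b) :
    Set.range (fun n => binaryToBase b (n + 1)) = {m | InDb b m} := by
  ext m
  constructor
  · rintro ⟨n, rfl⟩
    refine ⟨(binaryToBase_pos hb n.succ_ne_zero).ne', fun d hd => ?_⟩
    rw [digits_binaryToBase hb] at hd
    exact Nat.lt_succ_iff.mp (Nat.digits_lt_base one_lt_two hd)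
  · rintro ⟨hm, hdig⟩
    have hdig2 : Nat.digits 2 (Nat.ofDigits 2 (Nat.digits b m)) = Nat.digits b m :=
      Nat.digits_ofDigits 2 one_lt_two _ (fun d hd => Nat.lt_succ_iff.mpr (hdig d hd))
        fun _ => Nat.getLast_digit_ne_zero b hm
    have hpos : Nat.ofDigits 2 (Nat.digits b m) ≠ 0 := by
      intro h
      rw [h, Nat.digits_zero, eq_comm, Nat.digits_eq_nil_iff_eq_zero] at hdig2
      exact hm hdig2
    refine ⟨Nat.ofDigits 2 (Nat.digits b m) - 1, ?_⟩
    dsimp only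
    rw [Nat.sub_add_cancel (Nat.pos_of_ne_zero hpos), binaryToBase, hdig2, Nat.ofDigits_digits]

theorem eq_binaryToBase_succ_of_strictMono (hb : 2 ≤ b) {f : ℕ → ℕ} (hf : StrictMono f)
    (hrange : Set.range f = {m | InDb b m}) : f = fun n => binaryToBase b (n + 1) :=
  (hf.range_inj fun _ _ h => strictMono_binaryToBase hb (Nat.succ_lt_succ h)).mp
    (hrange.trans (range_binaryToBase_succ hb).symm)

theorem pow_sub_one_not_dvd_binaryToBase {T n : ℕ} (hn : n ≠ 0)
    (hlen : (Nat.digits 2 n).length < (b - 1) * T) : ¬ b ^ T - 1 ∣ binaryToBase b n := by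
  have hb : 2 ≤ b := by
    by_contra h
    simp [show b - 1 = 0 by omega] at hlen
  obtain ⟨s, hs, heq⟩ := Nat.exists_ofDigits_eq_sum_pow b
    (L := Nat.digits 2 n) fun _ hl => Nat.lt_succ_iff.mp (Nat.digits_lt_base one_lt_two hl)
  have hne : s.Nonempty := by
    rw [Finset.nonempty_iff_ne_empty]
    rintro rfl
    exact (binaryToBase_pos hb hn).ne' heq
  rw [binaryToBase, heq]
  exact Nat.pow_sub_one_not_dvd_sum_pow hne hs hlen

end binaryToBase

theorem inv_le_nearestIntDist_of_not_dvd {q : ℕ} {m : ℤ} (hq : 0 < q) (h : ¬ (q : ℤ) ∣ m) :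
    (q : ℝ)⁻¹ ≤ nearestIntDist ((q : ℝ)⁻¹ * m) := by
  rw [nearestIntDist]
  generalize round ((q : ℝ)⁻¹ * m) = z
  have hqR : (0 : ℝ) < q := by exact_mod_cast hq
  have hne : m - z * q ≠ 0 := fun h0 => h ⟨z, by linarith⟩
  have hone : (1 : ℝ) ≤ |(m : ℝ) - z * q| := by exact_mod_cast Int.one_le_abs hne
  calc (q : ℝ)⁻¹ = 1 / q := inv_eq_one_div _
    _ ≤ |(m : ℝ) - z * q| / q := by gcongr
    _ = |((m : ℝ) - z * q) / q| := by rw [abs_div, abs_of_pos hqR]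
    _ = |(q : ℝ)⁻¹ * m - z| := by congr 1; field_simp

namespace Real

theorem rpow_logb_mul_comm {x y : ℝ} (hx : 0 < x) (hy : 0 < y) (c t : ℝ) :
    x ^ (logb c y * t) = y ^ (logb c x * t) := by
  rw [rpow_def_of_pos hx, rpow_def_of_pos hy, logb, logb]
  ring_nf

end Real

theorem cast_log_div_add_one_le {b : ℕ} (hb : 2 ≤ b) (N : ℕ) :
    (((Nat.log 2 N + 1) / (b - 1) + 1 : ℕ) : ℝ) ≤ 2 + Real.logb 2 N / (b - 1) := by
  have hb1 : (1 : ℝ) ≤ b - 1 := by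
    have : (2 : ℝ) ≤ b := by exact_mod_cast hb
    linarith
  have hlog : (Nat.log 2 N : ℝ) ≤ Real.logb 2 N := by exact_mod_cast Real.natLog_le_logb N 2
  have hdiv : (((Nat.log 2 N + 1) / (b - 1) : ℕ) : ℝ) ≤ (Real.logb 2 N + 1) / (b - 1) := by
    refine Nat.cast_div_le.trans ?_
    rw [Nat.cast_sub (by omega), Nat.cast_add, Nat.cast_one]
    gcongr
  have hone : 1 / ((b : ℝ) - 1) ≤ 1 := by rw [div_le_one (by linarith)]; exact hb1
  push_cast
  rw [add_div] at hdiv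
  linarith

theorem inv_pow_four_mul_rpow_le {b N T : ℕ} (hb : 2 ≤ b) (hN : 0 < N) (hT0 : T ≠ 0)
    (hT : (T : ℝ) ≤ 4 + Real.logb 2 N / (b - 1)) :
    1 / (b : ℝ) ^ 4 * (N : ℝ) ^ (-Real.logb 2 b / ((b : ℝ) - 1)) ≤ ((b ^ T - 1 : ℕ) : ℝ)⁻¹ := by
  have hbR : (1 : ℝ) < b := by exact_mod_cast hb
  have hNR : (0 : ℝ) < N := by exact_mod_cast hN
  have hbT : (0 : ℝ) < ((b ^ T - 1 : ℕ) : ℝ) := by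
    exact_mod_cast Nat.sub_pos_of_lt (Nat.one_lt_pow hT0 hb)
  calc 1 / (b : ℝ) ^ 4 * (N : ℝ) ^ (-Real.logb 2 b / ((b : ℝ) - 1))
      = (b : ℝ) ^ (-(4 + Real.logb 2 N / (b - 1))) := by
        rw [show -Real.logb 2 b / ((b : ℝ) - 1) = Real.logb 2 b * (-1 / (b - 1)) by ring,
          ← Real.rpow_logb_mul_comm (by linarith) hNR,
          show -(4 + Real.logb 2 N / (b - 1)) = -4 + Real.logb 2 N * (-1 / ((b : ℝ) - 1)) by ring,
          Real.rpow_add (by linarith), Real.rpow_neg (by linarith)]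
        norm_cast
        rw [one_div]
    _ ≤ (b : ℝ) ^ (-(T : ℝ)) := Real.rpow_le_rpow_of_exponent_le hbR.le (neg_le_neg hT)
    _ = ((b ^ T : ℕ) : ℝ)⁻¹ := by rw [Real.rpow_neg (by linarith), Real.rpow_natCast]; push_cast; rfl
    _ ≤ ((b ^ T - 1 : ℕ) : ℝ)⁻¹ := inv_anti₀ hbT (by exact_mod_cast Nat.sub_le _ _)

/-- Indexing: `b_m = f (m - 1)`. -/
theorem exists_badly_approximable_general (b : ℕ) (hb : 2 ≤ b)
    (f : ℕ → ℕ) (hf : StrictMono f) (hrange : Set.range f = {n | InDb b n})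
    (N : ℕ) :
    ∃ γ : ℝ, ∀ n : ℕ, 1 ≤ n → n ≤ N →
      (1 / (b : ℝ) ^ 4) * (N : ℝ) ^ (-(Real.logb 2 b) / ((b : ℝ) - 1))
        ≤ nearestIntDist (γ * (f (n - 1) : ℝ)) := by
  obtain rfl := eq_binaryToBase_succ_of_strictMono hb hf hrange
  set T := (Nat.log 2 N + 1) / (b - 1) + 1
  refine ⟨((b ^ T - 1 : ℕ) : ℝ)⁻¹, fun n hn hnN => ?_⟩
  have hlen : (Nat.digits 2 n).length < (b - 1) * T :=
    ((Nat.digits_length_le_iff one_lt_two n).mpr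
      ((Nat.lt_pow_succ_log_self one_lt_two N).trans_le' hnN)).trans_lt
      (Nat.lt_mul_div_succ _ (by omega))
  have hT : (T : ℝ) ≤ 2 + Real.logb 2 N / (b - 1) := cast_log_div_add_one_le hb N
  have hq : 0 < b ^ T - 1 := Nat.sub_pos_of_lt (Nat.one_lt_pow (Nat.succ_ne_zero _) hb)
  calc _ ≤ ((b ^ T - 1 : ℕ) : ℝ)⁻¹ :=
        inv_pow_four_mul_rpow_le hb (by omega) (Nat.succ_ne_zero _) (by linarith)
    _ ≤ _ := by
      dsimp only
      rw [Nat.sub_add_cancel hn]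
      exact_mod_cast inv_le_nearestIntDist_of_not_dvd hq
        (by exact_mod_cast pow_sub_one_not_dvd_binaryToBase (by omega) hlen)

/-- `f` enumerates `D_b` in increasing order (so `b_m = f (m-1)`). For every `N ≥ 1`
there is `γ_N` with `‖γ_N b_n‖ ≥ b⁻⁴ N^{-(log₂ b)/(b-1)}` for `1 ≤ n ≤ N`. -/
theorem exists_badly_approximable (b : ℕ) (hb : 2 ≤ b)
    (f : ℕ → ℕ) (hf : StrictMono f) (hrange : Set.range f = {n | InDb b n})
    (N : ℕ) (hN : 1 ≤ N) :
    ∃ γ : ℝ, ∀ n : ℕ, 1 ≤ n → n ≤ N →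
      (1 / (b : ℝ) ^ 4) * (N : ℝ) ^ (-(Real.logb 2 b) / ((b : ℝ) - 1))
        ≤ nearestIntDist (γ * (f (n - 1) : ℝ)) :=
  exists_badly_approximable_general b hb f hf hrange N
end

section
/- Let N be a positive integer, T = ⌈log₂(N+1)⌉ and k = ⌈T/(b−1)⌉ + 1. Then with γ_N = 1/(b^k − 1), for every n with 1 ≤ n ≤ N one has ‖γ_N · b_n‖ ≥ 1/(b^k − 1). -/
def digitSum (b n : ℕ) : ℕ := (Nat.digits b n).sum

section DigitSum

variable {b : ℕ}

theorem digitSum_eq_mod_add (hb : 1 < b) (n : ℕ) :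
    digitSum b n = n % b + digitSum b (n / b) := by
  rcases Nat.eq_zero_or_pos n with rfl | hn
  · simp [digitSum]
  · simp [digitSum, Nat.digits_def' hb hn]

theorem digitSum_of_lt (hb : 1 < b) {n : ℕ} (hn : n < b) : digitSum b n = n := by
  rw [digitSum_eq_mod_add hb n, Nat.mod_eq_of_lt hn, Nat.div_eq_of_lt hn]
  simp [digitSum]

theorem digitSum_le_of_lt_pow (hb : 1 < b) {n k : ℕ} (hn : n < b ^ k) :
    digitSum b n ≤ (b - 1) * k :=
  calc digitSum b n ≤ (Nat.digits b n).length • (b - 1) :=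
        List.sum_le_card_nsmul _ _ fun _ hd => Nat.le_sub_one_of_lt (Nat.digits_lt_base hb hd)
    _ ≤ (b - 1) * k := by
        rw [smul_eq_mul, mul_comm]
        exact Nat.mul_le_mul_left _ ((Nat.digits_length_le_iff hb n).2 hn)

theorem digitSum_add_pow_mul (hb : 1 < b) {k r : ℕ} (hr : r < b ^ k) (q : ℕ) :
    digitSum b (r + b ^ k * q) = digitSum b r + digitSum b q := by
  rcases Nat.eq_zero_or_pos q with rfl | hq
  · simp [digitSum]
  obtain ⟨j, rfl⟩ := Nat.exists_eq_add_of_le ((Nat.digits_length_le_iff hb r).2 hr)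
  rw [digitSum, ← Nat.digits_append_zeroes_append_digits hb hq]
  simp [digitSum]

theorem digitSum_add_le (hb : 1 < b) (x y : ℕ) :
    digitSum b (x + y) ≤ digitSum b x + digitSum b y := by
  induction hn : x + y using Nat.strong_induction_on generalizing x y with
  | _ n ih =>
  rcases Nat.eq_zero_or_pos n with rfl | hpos
  · simp [digitSum, Nat.eq_zero_of_add_eq_zero_right hn, Nat.eq_zero_of_add_eq_zero_left hn]
  subst hn
  have hdiv : (x + y) / b < x + y := Nat.div_lt_self hpos hb
  rw [digitSum_eq_mod_add hb (x + y), digitSum_eq_mod_add hb x, digitSum_eq_mod_add hb y]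
  by_cases hc : x % b + y % b < b
  · rw [Nat.add_div_eq_of_add_mod_lt hc] at hdiv ⊢
    rw [Nat.add_mod, Nat.mod_eq_of_lt hc]
    have := ih _ hdiv (x / b) (y / b) rfl
    omega
  · rw [not_lt] at hc
    rw [Nat.add_div_eq_of_le_mod_add_mod hc (by omega)] at hdiv ⊢
    have hxb := Nat.mod_lt x (by omega : 0 < b)
    have hyb := Nat.mod_lt y (by omega : 0 < b)
    rw [Nat.add_mod, Nat.mod_eq_sub_mod hc, Nat.mod_eq_of_lt (by omega)]
    have hcarry := ih _ hdiv (x / b + y / b) 1 rfl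
    have hrest := ih _ (by omega) (x / b) (y / b) rfl
    rw [digitSum_of_lt hb hb] at hcarry
    omega

theorem digitSum_pow_sub_one (hb : 1 < b) (k : ℕ) : digitSum b (b ^ k - 1) = (b - 1) * k := by
  induction k with
  | zero => simp [digitSum]
  | succ k ih =>
    have hsplit : b ^ (k + 1) - 1 = (b - 1) + b ^ 1 * (b ^ k - 1) := by
      zify [Nat.one_le_pow k b (by omega), Nat.one_le_pow (k + 1) b (by omega), hb.le]
      ring
    rw [hsplit, digitSum_add_pow_mul hb (by rw [pow_one]; omega), ih,
      digitSum_of_lt hb (by omega)]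
    ring

theorem sub_one_mul_le_digitSum_of_dvd (hb : 1 < b) (k : ℕ) {m : ℕ} (hm : 0 < m)
    (hdvd : b ^ k - 1 ∣ m) : (b - 1) * k ≤ digitSum b m := by
  rcases Nat.eq_zero_or_pos k with rfl | hk
  · simp
  have hB : 2 ≤ b ^ k := hb.trans_le (Nat.le_self_pow hk.ne' b)
  induction m using Nat.strong_induction_on with
  | _ m ih =>
  by_cases hsmall : m < b ^ k
  · have : m = b ^ k - 1 := by have := Nat.le_of_dvd hm hdvd; omega
    rw [this, digitSum_pow_sub_one hb]
  obtain ⟨q, r, hr, rfl⟩ : ∃ q r, r < b ^ k ∧ m = r + b ^ k * q :=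
    ⟨m / b ^ k, m % b ^ k, Nat.mod_lt _ (by omega), (Nat.mod_add_div m (b ^ k)).symm⟩
  have hq : 0 < q := Nat.pos_of_ne_zero fun h => by simp [h] at hsmall; omega
  have hfold : r + b ^ k * q = (b ^ k - 1) * q + (q + r) := by
    zify [Nat.one_le_pow k b (by omega)]
    ring
  have hlt : q + r < r + b ^ k * q := by have := Nat.mul_le_mul_right q hB; omega
  have hdvd' : b ^ k - 1 ∣ q + r := (Nat.dvd_add_right (dvd_mul_right _ q)).1 (hfold ▸ hdvd)
  calc (b - 1) * k ≤ digitSum b (q + r) := ih _ hlt (by omega) hdvd'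
    _ ≤ digitSum b q + digitSum b r := digitSum_add_le hb q r
    _ = digitSum b (r + b ^ k * q) := by rw [digitSum_add_pow_mul hb hr, add_comm]

end DigitSum

def ofBinary (b n : ℕ) : ℕ := Nat.ofDigits b (Nat.digits 2 n)

section OfBinary

variable {b : ℕ}

theorem ofBinary_eq (n : ℕ) : ofBinary b n = n % 2 + b * ofBinary b (n / 2) := by
  rcases Nat.eq_zero_or_pos n with rfl | hn
  · simp [ofBinary]
  · rw [ofBinary, Nat.digits_def' one_lt_two hn, Nat.ofDigits_cons, ofBinary]

theorem ofBinary_lt_ofBinary_succ (hb : 1 < b) (n : ℕ) : ofBinary b n < ofBinary b (n + 1) := by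
  induction n using Nat.strong_induction_on with
  | _ n ih =>
  rw [ofBinary_eq n, ofBinary_eq (n + 1)]
  rcases Nat.mod_two_eq_zero_or_one n with h | h
  · rw [show (n + 1) / 2 = n / 2 by omega]
    omega
  · rw [show (n + 1) / 2 = n / 2 + 1 by omega]
    have := Nat.mul_le_mul_left b (ih (n / 2) (by omega))
    rw [Nat.mul_succ] at this
    omega

theorem ofBinary_strictMono (hb : 1 < b) : StrictMono (ofBinary b) :=
  strictMono_nat_of_lt_succ (ofBinary_lt_ofBinary_succ hb)

theorem digits_ofBinary (hb : 1 < b) (n : ℕ) : Nat.digits b (ofBinary b n) = Nat.digits 2 n :=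
  Nat.digits_ofDigits b hb _ (fun _ hd => (Nat.digits_lt_base one_lt_two hd).trans_le hb)
    fun h => Nat.getLast_digit_ne_zero 2 fun hn => h (by simp [hn])

theorem digitSum_ofBinary_le (hb : 1 < b) {n T : ℕ} (hn : n < 2 ^ T) :
    digitSum b (ofBinary b n) ≤ T := by
  simpa [digitSum, digits_ofBinary hb] using digitSum_le_of_lt_pow one_lt_two hn

theorem inDb_iff_exists_ofBinary (hb : 1 < b) {m : ℕ} :
    InDb b m ↔ ∃ n ≠ 0, ofBinary b n = m := by
  constructor
  · rintro ⟨hm, hdig⟩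
    have hbin : Nat.digits 2 (Nat.ofDigits 2 (Nat.digits b m)) = Nat.digits b m :=
      Nat.digits_ofDigits 2 one_lt_two _ (fun d hd => Nat.lt_succ_of_le (hdig d hd))
        fun _ => Nat.getLast_digit_ne_zero b hm
    have hval : ofBinary b (Nat.ofDigits 2 (Nat.digits b m)) = m := by
      rw [ofBinary, hbin, Nat.ofDigits_digits]
    exact ⟨_, fun h0 => hm (by simpa [h0, ofBinary] using hval.symm), hval⟩
  · rintro ⟨n, hn, rfl⟩
    refine ⟨fun h0 => ?_, fun d hd => ?_⟩
    · have := digits_ofBinary hb n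
      rw [h0, Nat.digits_zero, eq_comm, Nat.digits_eq_nil_iff_eq_zero] at this
      exact hn this
    · rw [digits_ofBinary hb] at hd
      exact Nat.le_of_lt_succ (Nat.digits_lt_base one_lt_two hd)

theorem range_ofBinary_succ (hb : 1 < b) :
    Set.range (fun j => ofBinary b (j + 1)) = {m | InDb b m} := by
  ext m
  simp only [Set.mem_range, Set.mem_ofPred_eq, inDb_iff_exists_ofBinary hb]
  constructor
  · rintro ⟨j, rfl⟩
    exact ⟨j + 1, j.succ_ne_zero, rfl⟩
  · rintro ⟨n, hn, rfl⟩
    exact ⟨n - 1, by rw [Nat.sub_add_cancel (Nat.one_le_iff_ne_zero.2 hn)]⟩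

theorem eq_ofBinary_succ_of_range_eq {f : ℕ → ℕ} (hb : 1 < b) (hf : StrictMono f)
    (hrange : Set.range f = {m | InDb b m}) : f = fun j => ofBinary b (j + 1) :=
  (hf.range_inj fun _ _ h => ofBinary_strictMono hb (Nat.succ_lt_succ h)).1
    (hrange.trans (range_ofBinary_succ hb).symm)

end OfBinary

theorem one_div_le_nearestIntDist_of_not_dvd {q m : ℕ} (hm : ¬ q ∣ m) :
    1 / (q : ℝ) ≤ nearestIntDist (1 / q * m) := by
  rcases Nat.eq_zero_or_pos q with rfl | hq
  · simp [nearestIntDist]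
  have hqR : (0 : ℝ) < q := by exact_mod_cast hq
  rw [nearestIntDist]
  generalize round (1 / (q : ℝ) * m) = z
  have hne : (m : ℤ) - z * q ≠ 0 := fun h =>
    hm (Int.natCast_dvd_natCast.1 ⟨z, by linarith⟩)
  calc 1 / (q : ℝ) ≤ |(((m : ℤ) - z * q : ℤ) : ℝ)| / q := by
        gcongr
        exact_mod_cast Int.one_le_abs hne
    _ = |(((m : ℤ) - z * q : ℤ) : ℝ) / q| := by rw [abs_div, abs_of_pos hqR]
    _ = |1 / (q : ℝ) * m - z| := by
        congr 1
        push_cast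
        field_simp

theorem succ_le_two_pow_of_eq_ceil_logb {N T : ℕ}
    (hT : (T : ℤ) = ⌈Real.logb 2 ((N : ℝ) + 1)⌉) : N + 1 ≤ 2 ^ T := by
  have hclog : T = Nat.clog 2 (N + 1) := by
    have := Real.ceil_logb_natCast (b := 2) (r := ((N + 1 : ℕ) : ℝ)) (by positivity)
    rw [Int.clog_natCast] at this
    push_cast at this
    omega
  exact hclog ▸ Nat.le_pow_clog one_lt_two _

theorem lt_mul_of_eq_ceil_div_add_one {T d k : ℕ} (hd : 0 < d)
    (hk : (k : ℤ) = ⌈(T : ℝ) / d⌉ + 1) : T < d * k := by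
  have hceil := Int.le_ceil ((T : ℝ) / d)
  rw [show ⌈(T : ℝ) / d⌉ = k - 1 by omega, div_le_iff₀ (by positivity)] at hceil
  push_cast at hceil
  have hdR : (1 : ℝ) ≤ d := by exact_mod_cast hd
  exact_mod_cast (show (T : ℝ) < d * k by nlinarith)

theorem explicit_badly_approximable_general (b : ℕ) (hb : 2 ≤ b)
    (f : ℕ → ℕ) (hf : StrictMono f) (hrange : Set.range f = {n | InDb b n})
    (N : ℕ) (T k : ℕ)
    (hT : (T : ℤ) = ⌈Real.logb 2 ((N : ℝ) + 1)⌉)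
    (hk : (k : ℤ) = ⌈(T : ℝ) / ((b : ℝ) - 1)⌉ + 1) :
    ∀ n : ℕ, 1 ≤ n → n ≤ N →
      1 / ((b : ℝ) ^ k - 1)
        ≤ nearestIntDist ((1 / ((b : ℝ) ^ k - 1)) * (f (n - 1) : ℝ)) := by
  intro n hn hnN
  have hnT : n < 2 ^ T := by have := succ_le_two_pow_of_eq_ceil_logb hT; omega
  have hTk : T < (b - 1) * k :=
    lt_mul_of_eq_ceil_div_add_one (by omega) (by rwa [Nat.cast_pred (by omega)])
  have hfn : f (n - 1) = ofBinary b n := by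
    rw [eq_ofBinary_succ_of_range_eq hb hf hrange]
    dsimp only
    rw [Nat.sub_add_cancel hn]
  have hndvd : ¬ b ^ k - 1 ∣ f (n - 1) := fun hdvd => by
    have hmem : f (n - 1) ∈ {m | InDb b m} := hrange ▸ Set.mem_range_self _
    have hpos : 0 < f (n - 1) := Nat.pos_of_ne_zero hmem.1
    have hlow := sub_one_mul_le_digitSum_of_dvd hb k hpos hdvd
    have hhigh := digitSum_ofBinary_le hb hnT
    rw [hfn] at hlow
    omega
  have hcast : ((b ^ k - 1 : ℕ) : ℝ) = (b : ℝ) ^ k - 1 := by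
    push_cast [Nat.one_le_pow k b (by omega)]
    ring
  rw [← hcast]
  exact one_div_le_nearestIntDist_of_not_dvd hndvd

/-- With `T = ⌈log₂(N+1)⌉`, `k = ⌈T/(b-1)⌉ + 1` and `γ_N = 1/(b^k - 1)`, one has
`‖γ_N b_n‖ ≥ 1/(b^k - 1)` for all `1 ≤ n ≤ N`, where `b_m = f (m-1)` enumerates
`D_b` in increasing order. -/
theorem explicit_badly_approximable (b : ℕ) (hb : 2 ≤ b)
    (f : ℕ → ℕ) (hf : StrictMono f) (hrange : Set.range f = {n | InDb b n})
    (N : ℕ) (hN : 1 ≤ N) (T k : ℕ)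
    (hT : (T : ℤ) = ⌈Real.logb 2 ((N : ℝ) + 1)⌉)
    (hk : (k : ℤ) = ⌈(T : ℝ) / ((b : ℝ) - 1)⌉ + 1) :
    ∀ n : ℕ, 1 ≤ n → n ≤ N →
      1 / ((b : ℝ) ^ k - 1)
        ≤ nearestIntDist ((1 / ((b : ℝ) ^ k - 1)) * (f (n - 1) : ℝ)) :=
  explicit_badly_approximable_general b hb f hf hrange N T k hT hk
end

section
/- For every real γ and every integer N ≥ 2, there exists n ∈ D_b with 1 ≤ n ≤ N such that ‖γn‖ ≤ A_b / log N, where A_b is a constant depending only on b. -/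
/-! The numbers `b ^ i * (1 + b + ⋯ + b ^ (m - 1))` have only the digits `0` and `1`, and they are
the differences of the repunits `R 0 < R 1 < ⋯ < R K`. Take `K = ⌊log_b N⌋`, so that
`R K < b ^ K ≤ N`. By the box principle two of the `K + 1` reals `γ * R t` lie within `1 / K` of
each other modulo `1`, which gives `‖γ n‖ < 1 / K ≤ 2 log b / log N` because
`log N < (K + 1) log b ≤ 2 K log b`. When `K = 0`, that is `N < b`, the choice `n = 1` works. -/

def repunit (b k : ℕ) : ℕ := Nat.ofDigits b (List.replicate k 1)

theorem digits_repunit {b : ℕ} (hb : 1 < b) (k : ℕ) :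
    Nat.digits b (repunit b k) = List.replicate k 1 :=
  Nat.digits_ofDigits b hb _ (fun _ h ↦ (List.eq_of_mem_replicate h).symm ▸ hb)
    (fun h ↦ by simp [List.getLast_replicate])

theorem repunit_add (b i m : ℕ) : repunit b (i + m) = repunit b i + b ^ i * repunit b m := by
  rw [repunit, List.replicate_add, Nat.ofDigits_append, List.length_replicate]; rfl

theorem repunit_pos {b : ℕ} (hb : 1 < b) {k : ℕ} (hk : k ≠ 0) : 0 < repunit b k := by
  refine Nat.pos_of_ne_zero fun h ↦ hk ?_
  simpa [h] using (digits_repunit hb k).symm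

theorem repunit_lt_pow {b : ℕ} (hb : 1 < b) (k : ℕ) : repunit b k < b ^ k := by
  simpa [digits_repunit hb] using Nat.lt_base_pow_length_digits (m := repunit b k) hb

theorem repunit_mono (b : ℕ) : Monotone (repunit b) := fun i j hij ↦ by
  obtain ⟨m, rfl⟩ := Nat.exists_eq_add_of_le hij
  rw [repunit_add]
  exact Nat.le_add_right _ _

theorem inDb_pow_mul_repunit {b : ℕ} (hb : 1 < b) (i : ℕ) {m : ℕ} (hm : m ≠ 0) :
    InDb b (b ^ i * repunit b m) := by
  refine ⟨(Nat.mul_pos (pow_pos (by omega) i) (repunit_pos hb hm)).ne', fun d hd ↦ ?_⟩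
  rw [Nat.digits_base_pow_mul hb (repunit_pos hb hm), digits_repunit hb] at hd
  rcases List.mem_append.mp hd with h | h <;> simp [List.eq_of_mem_replicate h]

theorem nearestIntDist_le_half (y : ℝ) : nearestIntDist y ≤ 1 / 2 := abs_sub_round y

theorem nearestIntDist_sub_le_abs_fract_sub (x y : ℝ) :
    nearestIntDist (x - y) ≤ |Int.fract x - Int.fract y| := by
  refine (round_le (x - y) (⌊x⌋ - ⌊y⌋)).trans_eq ?_
  rw [Int.fract, Int.fract]
  push_cast
  ring_nf

theorem exists_lt_nearestIntDist_sub_lt (x : ℕ → ℝ) {K : ℕ} (hK : 0 < K) :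
    ∃ i j, i < j ∧ j ≤ K ∧ nearestIntDist (x j - x i) < 1 / K := by
  have hKR : (0 : ℝ) < K := by exact_mod_cast hK
  let box : ℕ → ℤ := fun t ↦ ⌊K * Int.fract (x t)⌋
  have hbox : ∀ t ∈ Finset.range (K + 1), box t ∈ Finset.Ico 0 (K : ℤ) := fun t _ ↦ by
    refine Finset.mem_Ico.mpr ⟨Int.floor_nonneg.mpr (by positivity), Int.floor_lt.mpr ?_⟩
    simpa using mul_lt_of_lt_one_right hKR (Int.fract_lt_one (x t))
  obtain ⟨i, hi, j, hj, hij, hbij⟩ :=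
    Finset.exists_ne_map_eq_of_card_lt_of_maps_to (by simp) hbox
  wlog hlt : i < j generalizing i j
  · exact this j hj i hi hij.symm hbij.symm (by omega)
  refine ⟨i, j, hlt, Finset.mem_range_succ_iff.mp hj, ?_⟩
  have hclose : |K * Int.fract (x j) - K * Int.fract (x i)| < 1 :=
    Int.abs_sub_lt_one_of_floor_eq_floor hbij.symm
  rw [← mul_sub, abs_mul, abs_of_pos hKR, ← lt_div_iff₀' hKR] at hclose
  exact (nearestIntDist_sub_le_abs_fract_sub _ _).trans_lt hclose

theorem exists_inDb_le_repunit_nearestIntDist_mul_lt {b : ℕ} (hb : 1 < b) (γ : ℝ) {K : ℕ}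
    (hK : 0 < K) : ∃ n, InDb b n ∧ n ≤ repunit b K ∧ nearestIntDist (γ * n) < 1 / K := by
  obtain ⟨i, j, hij, hjK, hclose⟩ :=
    exists_lt_nearestIntDist_sub_lt (fun t ↦ γ * repunit b t) hK
  obtain ⟨m, rfl⟩ := Nat.exists_eq_add_of_lt hij
  refine ⟨b ^ i * repunit b (m + 1), inDb_pow_mul_repunit hb i m.succ_ne_zero, ?_, ?_⟩
  · calc b ^ i * repunit b (m + 1) ≤ repunit b (i + (m + 1)) := by
          rw [repunit_add b i]; exact le_add_self
      _ ≤ repunit b K := repunit_mono b hjK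
  · have hdiff : γ * repunit b (i + m + 1) - γ * repunit b i
        = γ * ↑(b ^ i * repunit b (m + 1)) := by
      rw [add_assoc, repunit_add]; push_cast; ring
    simpa only [hdiff] using hclose

theorem Real.log_natCast_lt_natLog_add_one_mul {b : ℕ} (hb : 1 < b) (N : ℕ) :
    Real.log N < (Nat.log b N + 1) * Real.log b := by
  have hlogb : 0 < Real.log b := Real.log_pos (by exact_mod_cast hb)
  rcases N.eq_zero_or_pos with rfl | hN
  · simpa using hlogb
  calc Real.log N < Real.log (b ^ (Nat.log b N + 1) : ℕ) :=
        Real.log_lt_log (by exact_mod_cast hN) (by exact_mod_cast Nat.lt_pow_succ_log_self hb N)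
    _ = (Nat.log b N + 1) * Real.log b := by push_cast; rw [Real.log_pow]; push_cast; ring

theorem elementary_approximation (b : ℕ) (hb : 2 ≤ b) :
    ∃ A : ℝ, 0 < A ∧ ∀ γ : ℝ, ∀ N : ℕ, 2 ≤ N →
      ∃ n : ℕ, InDb b n ∧ 1 ≤ n ∧ n ≤ N ∧
        nearestIntDist (γ * (n : ℝ)) ≤ A / Real.log N := by
  have hb1 : 1 < b := hb
  have hlogb : 0 < Real.log b := Real.log_pos (by exact_mod_cast hb1)
  refine ⟨2 * Real.log b, by positivity, fun γ N hN ↦ ?_⟩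
  have hlogN : 0 < Real.log N := Real.log_pos (by exact_mod_cast hN)
  have hlogN_lt := Real.log_natCast_lt_natLog_add_one_mul hb1 N
  rcases (Nat.log b N).eq_zero_or_pos with hK | hK
  · refine ⟨1, by simpa [repunit] using inDb_pow_mul_repunit hb1 0 one_ne_zero, le_rfl,
      by omega, (nearestIntDist_le_half _).trans ?_⟩
    rw [hK] at hlogN_lt
    rw [le_div_iff₀ hlogN]
    push_cast at hlogN_lt
    linarith
  · obtain ⟨n, hn, hnK, hγn⟩ := exists_inDb_le_repunit_nearestIntDist_mul_lt hb1 γ hK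
    refine ⟨n, hn, Nat.one_le_iff_ne_zero.mpr hn.1, ?_, hγn.le.trans ?_⟩
    · exact (hnK.trans (repunit_lt_pow hb1 _).le).trans (Nat.pow_log_le_self b (by omega))
    · have hK1 : (1 : ℝ) ≤ Nat.log b N := by exact_mod_cast hK
      rw [div_le_div_iff₀ (by positivity) hlogN]
      nlinarith
end

section
/- Let b ≥ 3 and N ≥ 1. If A ⊆ ℤ is a finite set such that every positive difference of two elements of A lies in D_b ∩ [1, N], then #A ≤ ⌊log_b N⌋ + 2. -/
open Finset

namespace Nat

variable {b : ℕ}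

theorem digits_sum_eq_mod_add_digits_sum_div (hb : 1 < b) (n : ℕ) :
    (b.digits n).sum = n % b + (b.digits (n / b)).sum := by
  rcases eq_or_ne n 0 with rfl | hn
  · simp
  · rw [digits_eq_cons_digits_div hb hn, List.sum_cons]

theorem digits_div_le_one_of_digits_le_one (hb : 1 < b) {n : ℕ}
    (h : ∀ d ∈ b.digits n, d ≤ 1) :
    n % b ≤ 1 ∧ ∀ d ∈ b.digits (n / b), d ≤ 1 := by
  rcases eq_or_ne n 0 with rfl | hn
  · simp
  · rwa [digits_eq_cons_digits_div hb hn, List.forall_mem_cons] at h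

theorem digits_sum_add_of_digits_le_one (hb : 3 ≤ b) {m n : ℕ}
    (hm : ∀ d ∈ b.digits m, d ≤ 1) (hn : ∀ d ∈ b.digits n, d ≤ 1) :
    (b.digits (m + n)).sum = (b.digits m).sum + (b.digits n).sum := by
  induction m using Nat.strong_induction_on generalizing n with
  | _ m ih =>
  rcases eq_or_ne m 0 with rfl | hm0
  · simp
  obtain ⟨hm_mod, hm_div⟩ := digits_div_le_one_of_digits_le_one (by omega) hm
  obtain ⟨hn_mod, hn_div⟩ := digits_div_le_one_of_digits_le_one (by omega) hn
  -- the last digits add up to at most `2 < b`, so there is no carry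
  have hmod : (m + n) % b = m % b + n % b := by
    rw [Nat.add_mod, Nat.mod_eq_of_lt (by omega)]
  have hdiv : (m + n) / b = m / b + n / b := by
    rw [Nat.add_div (by omega), if_neg (by omega), Nat.add_zero]
  have hlt : m / b < m := Nat.div_lt_self (Nat.pos_of_ne_zero hm0) (by omega)
  rw [digits_sum_eq_mod_add_digits_sum_div (by omega) (m + n), hmod, hdiv,
    ih _ hlt hm_div hn_div, digits_sum_eq_mod_add_digits_sum_div (by omega) m,
    digits_sum_eq_mod_add_digits_sum_div (by omega) n]
  ring

theorem digits_sum_pos {n : ℕ} (hn : n ≠ 0) : 0 < (b.digits n).sum :=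
  (Nat.pos_of_ne_zero (getLast_digit_ne_zero b hn)).trans_le
    (List.le_sum_of_mem (List.getLast_mem _))

theorem digits_sum_le_log_succ (hb : 1 < b) {n : ℕ} (h : ∀ d ∈ b.digits n, d ≤ 1) :
    (b.digits n).sum ≤ log b n + 1 := by
  rcases eq_or_ne n 0 with rfl | hn
  · simp
  · simpa [length_digits b n hb hn] using List.sum_le_card_nsmul _ 1 h

end Nat

theorem Finset.card_le_succ_of_strictMonoOn {α : Type*} [LinearOrder α] {s : Finset α}
    {f : α → ℕ} {L : ℕ} (hf : StrictMonoOn f s) (hL : ∀ a ∈ s, f a ≤ L) : #s ≤ L + 1 := by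
  simpa using card_le_card_of_injOn f (t := range (L + 1))
    (fun a ha => mem_range.2 (Nat.lt_succ_of_le (hL a ha))) hf.injOn

theorem Finset.card_le_of_sub_digits_le_one {b L : ℕ} (hb : 3 ≤ b) {A : Finset ℤ}
    (hA : ∀ x ∈ A, ∀ y ∈ A, x ≤ y →
      (∀ d ∈ b.digits (y - x).toNat, d ≤ 1) ∧ (b.digits (y - x).toNat).sum ≤ L) :
    #A ≤ L + 1 := by
  rcases A.eq_empty_or_nonempty with rfl | hne
  · simp
  set a₀ := A.min' hne
  have ha₀ : a₀ ∈ A := A.min'_mem hne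
  refine card_le_succ_of_strictMonoOn (f := fun a => (b.digits (a - a₀).toNat).sum)
    (fun x hx y hy hxy => ?_) (fun a ha => (hA a₀ ha₀ a ha (A.min'_le a ha)).2)
  have hsplit : (y - a₀).toNat = (x - a₀).toNat + (y - x).toNat := by
    have := A.min'_le x hx
    omega
  simp only [hsplit]
  rw [Nat.digits_sum_add_of_digits_le_one hb (hA a₀ ha₀ x hx (A.min'_le x hx)).1
    (hA x hx y hy hxy.le).1]
  exact Nat.lt_add_of_pos_right (Nat.digits_sum_pos (by omega))

theorem difference_set_card_bound_general (b : ℕ) (hb : 3 ≤ b) (N : ℕ)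
    (A : Finset ℤ)
    (hA : ∀ x ∈ A, ∀ y ∈ A, x < y →
      ∃ m : ℕ, (y - x : ℤ) = (m : ℤ) ∧ InDb b m ∧ 1 ≤ m ∧ m ≤ N) :
    (A.card : ℤ) ≤ ⌊Real.logb b N⌋ + 2 := by
  rw [Real.floor_logb_natCast (Nat.cast_nonneg N), Int.log_natCast]
  have hdiff : ∀ x ∈ A, ∀ y ∈ A, x ≤ y → (∀ d ∈ b.digits (y - x).toNat, d ≤ 1) ∧
      (b.digits (y - x).toNat).sum ≤ Nat.log b N + 1 := by
    intro x hx y hy hxy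
    rcases hxy.eq_or_lt with rfl | hlt
    · simp
    obtain ⟨m, hm, ⟨-, hdigits⟩, -, hmN⟩ := hA x hx y hy hlt
    rw [hm, Int.toNat_natCast]
    exact ⟨hdigits, (Nat.digits_sum_le_log_succ (by omega) hdigits).trans
      (Nat.add_le_add_right (Nat.log_mono_right hmN) 1)⟩
  have := card_le_of_sub_digits_le_one hb hdiff
  omega

/-- If every positive difference of two elements of a finite set `A ⊆ ℤ`
lies in `D_b ∩ [1, N]` (with `b ≥ 3`), then `#A ≤ ⌊log_b N⌋ + 2`. -/
theorem difference_set_card_bound (b : ℕ) (hb : 3 ≤ b) (N : ℕ) (hN : 1 ≤ N)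
    (A : Finset ℤ)
    (hA : ∀ x ∈ A, ∀ y ∈ A, x < y →
      ∃ m : ℕ, (y - x : ℤ) = (m : ℤ) ∧ InDb b m ∧ 1 ≤ m ∧ m ≤ N) :
    (A.card : ℤ) ≤ ⌊Real.logb b N⌋ + 2 :=
  difference_set_card_bound_general b hb N A hA
end

section
/- Suppose f : ℕ → ℝ is positive and for every real γ there exists n ∈ D_b* with 1 ≤ n ≤ N and ‖γn‖ ≤ f(N). Then for every real γ there exists n ∈ D_b with 1 ≤ n ≤ N and ‖γn‖ ≤ (b−1)·f(N). -/
/-- `n ∈ D_b* = D_b ∪ { b^d - b^c : d > c ≥ 0 }`. -/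
def InDbStar (b n : ℕ) : Prop := InDb b n ∨ ∃ c d : ℕ, c < d ∧ n = b ^ d - b ^ c

theorem abs_sub_round_natCast_mul_le {α : Type*} [Field α] [LinearOrder α] [IsStrictOrderedRing α]
    [FloorRing α] (k : ℕ) (x : α) :
    |k * x - round (k * x)| ≤ k * |x - round x| :=
  calc |k * x - round (k * x)|
      ≤ |k * x - ((k * round x : ℤ) : α)| := round_le _ _
    _ = k * |x - round x| := by
      push_cast
      rw [← mul_sub, abs_mul, Nat.abs_cast]

theorem Nat.sub_one_mul_ofDigits_replicate_one_add_one {b : ℕ} (hb : 1 ≤ b) (k : ℕ) :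
    (b - 1) * Nat.ofDigits b (List.replicate k 1) + 1 = b ^ k := by
  obtain ⟨a, rfl⟩ := Nat.exists_eq_add_of_le' hb
  induction k with
  | zero => simp
  | succ k ih =>
    rw [List.replicate_succ, Nat.ofDigits_cons, pow_succ, ← ih]
    simp only [Nat.add_sub_cancel]
    ring

theorem Nat.digits_ofDigits_replicate_one {b : ℕ} (hb : 1 < b) (k : ℕ) :
    Nat.digits b (Nat.ofDigits b (List.replicate k 1)) = List.replicate k 1 :=
  Nat.digits_ofDigits b hb _ (fun _ hl => (List.eq_of_mem_replicate hl).symm ▸ hb)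
    (fun hne => by simp [List.getLast_replicate])

theorem exists_inDb_sub_one_mul_eq_pow_sub_pow {b c d : ℕ} (hb : 1 < b) (hcd : c < d) :
    ∃ m, InDb b m ∧ (b - 1) * m = b ^ d - b ^ c := by
  set R := Nat.ofDigits b (List.replicate (d - c) 1)
  have hR : 0 < R := by
    rw [Nat.pos_iff_ne_zero, Ne, ← Nat.digits_eq_nil_iff_eq_zero,
      Nat.digits_ofDigits_replicate_one hb, List.replicate_eq_nil_iff]
    omega
  refine ⟨b ^ c * R, ⟨by positivity, fun x hx => ?_⟩, ?_⟩
  · rw [Nat.digits_base_pow_mul hb hR, Nat.digits_ofDigits_replicate_one hb] at hx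
    rcases List.mem_append.1 hx with hx | hx <;> simp [List.eq_of_mem_replicate hx]
  · have hrep := Nat.sub_one_mul_ofDigits_replicate_one_add_one hb.le (d - c)
    rw [mul_left_comm, Nat.eq_sub_of_add_eq hrep, Nat.mul_sub, mul_one, ← pow_add,
      Nat.add_sub_cancel' hcd.le]

theorem approx_transfer_general (b : ℕ) (hb : 2 ≤ b) (N : ℕ) (f : ℕ → ℝ)
    (h : ∀ γ : ℝ, ∃ n : ℕ, InDbStar b n ∧ 1 ≤ n ∧ n ≤ N ∧
      |γ * (n : ℝ) - round (γ * (n : ℝ))| ≤ f N) :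
    ∀ γ : ℝ, ∃ n : ℕ, InDb b n ∧ 1 ≤ n ∧ n ≤ N ∧
      |γ * (n : ℝ) - round (γ * (n : ℝ))| ≤ ((b : ℝ) - 1) * f N := by
  intro γ
  have hcast : ((b - 1 : ℕ) : ℝ) = (b : ℝ) - 1 := by rw [Nat.cast_sub (by omega), Nat.cast_one]
  have hb1 : (1 : ℝ) ≤ (b : ℝ) - 1 := by
    rw [← hcast]; exact_mod_cast (by omega : 1 ≤ b - 1)
  have hb1_ne : (b : ℝ) - 1 ≠ 0 := by linarith
  obtain ⟨n, hn | ⟨c, d, hcd, rfl⟩, hn1, hnN, happrox⟩ := h (γ / ((b : ℝ) - 1))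
  · refine ⟨n, hn, hn1, hnN, ?_⟩
    have hγ : γ * n = ((b - 1 : ℕ) : ℝ) * (γ / ((b : ℝ) - 1) * n) := by
      rw [hcast]; field_simp
    rw [hγ]
    refine (abs_sub_round_natCast_mul_le _ _).trans ?_
    rw [hcast]
    gcongr
  · obtain ⟨m, hm, hmn⟩ := exists_inDb_sub_one_mul_eq_pow_sub_pow (b := b) (by omega) hcd
    have hm1 : 1 ≤ m := Nat.one_le_iff_ne_zero.2 hm.1
    refine ⟨m, hm, hm1, le_trans (hmn ▸ Nat.le_mul_of_pos_left m (by omega)) hnN, ?_⟩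
    have hγ : γ / ((b : ℝ) - 1) * ((b ^ d - b ^ c : ℕ) : ℝ) = γ * m := by
      rw [← hmn, Nat.cast_mul, hcast]; field_simp
    rw [hγ] at happrox
    exact happrox.trans (le_mul_of_one_le_left ((abs_nonneg _).trans happrox) hb1)

/-- Transfer of approximation quality from `D_b*` to `D_b`. -/
theorem approx_transfer (b : ℕ) (hb : 2 ≤ b) (N : ℕ) (f : ℕ → ℝ)
    (hf : ∀ n, 0 < f n)
    (h : ∀ γ : ℝ, ∃ n : ℕ, InDbStar b n ∧ 1 ≤ n ∧ n ≤ N ∧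
      |γ * (n : ℝ) - round (γ * (n : ℝ))| ≤ f N) :
    ∀ γ : ℝ, ∃ n : ℕ, InDb b n ∧ 1 ≤ n ∧ n ≤ N ∧
      |γ * (n : ℝ) - round (γ * (n : ℝ))| ≤ ((b : ℝ) - 1) * f N :=
  approx_transfer_general b hb N f h
end
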